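/- There exists a trace of the platform-confusion system containing an event Emit(src, r) followed later by an event Accept(dst, r) with src ≠ dst; i.e., the firmware on the destination platform accepts a guest message that the guest issued while it was executing on the source platform, so agreement between guest and firmware on the executing platform fails. (This is the platform confusion attack falsifying the paper's authentication lemmas AuthFWGVMMsgAgreeForAttestAssocMA and AuthFWGVMMsgAgreeForKeyDerAssocMA.) -/

import Mathlib

/-- The two distinct platforms of the platform-confusion scenario. -/
inductive Platform : Type
  | src
  | dst
deriving DecidableEq

/-- The other platform (target of a migration). -/
def Platform.other : Platform → Platform
  | .src => .dst
  | .dst => .src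

/-- The phase of the guest: idle, or waiting for a firmware response. -/
inductive Phase : Type
  | Idle
  | Waiting
deriving DecidableEq

/-- Logged events: `emit p r` (the guest, residing on platform `p`, issues the
request `r`) and `accept p r` (the firmware of platform `p` accepts request `r`). -/
inductive PCEvent (R : Type) : Type
  | emit (p : Platform) (r : R)
  | accept (p : Platform) (r : R)

/-- The request identifier occurring in an event. -/
def PCEvent.rid {R : Type} : PCEvent R → R
  | .emit _ r => r
  | .accept _ r => r

/-- A configuration of the platform-confusion system: the platform on which the
guest context currently resides, the guest's message counter, the phase, and the
set of in-flight requests `(nonce, request identifier)`. -/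
structure PCConf (R : Type) : Type where
  p : Platform
  c : ℕ
  ph : Phase
  net : Multiset (ℕ × R)

/-- `ReachPC R cfg evs`: the platform-confusion system reaches configuration
`cfg` from the initial configuration `(src, 0, Idle, ∅)`, logging events `evs`
in order.  `emit` requires phase `Idle`, uses a fresh request identifier, puts
`(c, r)` on the network and moves to phase `Waiting`; `migrate` moves the
context to the other platform; `accept` requires phase `Waiting` and an
in-flight request whose nonce equals the current counter `c`, removes it from
the network, logs `accept`, advances `c` by two and returns to phase `Idle`. -/
inductive ReachPC (R : Type) : PCConf R → List (PCEvent R) → Prop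
  | init : ReachPC R ⟨Platform.src, 0, Phase.Idle, 0⟩ []
  | emit {p : Platform} {c : ℕ} {net : Multiset (ℕ × R)} {evs : List (PCEvent R)}
      (r : R) :
      ReachPC R ⟨p, c, Phase.Idle, net⟩ evs →
      r ∉ evs.map PCEvent.rid →
      ReachPC R ⟨p, c, Phase.Waiting, (c, r) ::ₘ net⟩ (evs ++ [PCEvent.emit p r])
  | migrate {p : Platform} {c : ℕ} {ph : Phase} {net : Multiset (ℕ × R)}
      {evs : List (PCEvent R)} :
      ReachPC R ⟨p, c, ph, net⟩ evs →
      ReachPC R ⟨p.other, c, ph, net⟩ evs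
  | accept {p : Platform} {c : ℕ} {rest : Multiset (ℕ × R)} {evs : List (PCEvent R)}
      (r : R) :
      ReachPC R ⟨p, c, Phase.Waiting, (c, r) ::ₘ rest⟩ evs →
      ReachPC R ⟨p, c + 2, Phase.Idle, rest⟩ (evs ++ [PCEvent.accept p r])


/-- The platform confusion attack falsifying the paper's authentication lemmas
AuthFWGVMMsgAgreeForAttestAssocMA and AuthFWGVMMsgAgreeForKeyDerAssocMA: there
exists a trace containing an event `Emit(src, r)` followed later by an event
`Accept(dst, r)` with `src ≠ dst`; i.e., the firmware on the destination
platform accepts a guest message that the guest issued while it was executing on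
the source platform. -/
theorem platform_confusion_attack :
    ∃ (cfg : PCConf ℕ) (evs : List (PCEvent ℕ)) (r : ℕ),
      ReachPC ℕ cfg evs ∧
      List.Sublist [PCEvent.emit Platform.src r, PCEvent.accept Platform.dst r] evs ∧
      Platform.src ≠ Platform.dst := by
  refine ⟨⟨Platform.dst, 2, Phase.Idle, 0⟩,
    [PCEvent.emit Platform.src 0, PCEvent.accept Platform.dst 0], 0, ?_, ?_, ?_⟩
  · have h1 := ReachPC.emit (R := ℕ) 0 ReachPC.init (by simp)
    have h2 := ReachPC.migrate h1
    have h3 := ReachPC.accept (R := ℕ) 0 h2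
    simpa [Platform.other] using h3
  · simp
  · simp
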